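/- Assume the Gaussian linear model, condition (minvar), and assumption (A') with constants Δ_j and exceptional probability κ, and let λ > 0. Then with probability at least 1 − κ, for any subset G ⊆ {1,…,p} with β⁰_j = 0 for all j ∈ G (H_{0,G} holds): max_{j∈G} a_{n,p;j}(σ)|β̂_corr;j| ≤ max_{j∈G} ( a_{n,p;j}(σ)|Z_j| + Δ_j ) + ‖a_{n,p}b(λ)‖_∞, where Z_j = β̂_j − E[β̂_j] and (Z₁,…,Z_p) ~ N_p(0, n⁻¹σ²Ω(λ)). -/

import Mathlib

open MeasureTheory ProbabilityTheory Filter Matrix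

noncomputable section

namespace PaperRidge

/-- Euclidean (ℓ₂) norm of a vector in `ℝᵖ`. -/
def l2norm {p : ℕ} (v : Fin p → ℝ) : ℝ := Real.sqrt (∑ j, v j ^ 2)

/-- `Σ̂ = n⁻¹ Xᵀ X`. -/
def Sigmahat (n : ℕ) {p : ℕ} (X : Matrix (Fin n) (Fin p) ℝ) : Matrix (Fin p) (Fin p) ℝ :=
  ((n : ℝ))⁻¹ • (Xᵀ * X)

/-- `Ω(λ) = (Σ̂ + λ I)⁻¹ Σ̂ (Σ̂ + λ I)⁻¹`. -/
def OmegaM (n : ℕ) {p : ℕ} (X : Matrix (Fin n) (Fin p) ℝ) (lam : ℝ) :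
    Matrix (Fin p) (Fin p) ℝ :=
  (Sigmahat n X + lam • (1 : Matrix (Fin p) (Fin p) ℝ))⁻¹ * Sigmahat n X *
    (Sigmahat n X + lam • (1 : Matrix (Fin p) (Fin p) ℝ))⁻¹

/-- `Ω_min(λ) = min_j Ω(λ)_jj`. -/
def OmegaMin (n : ℕ) {p : ℕ} (X : Matrix (Fin n) (Fin p) ℝ) (lam : ℝ) : ℝ :=
  ⨅ j : Fin p, OmegaM n X lam j j

/-- The Ridge estimator `β̂(λ) = (Σ̂ + λ I)⁻¹ n⁻¹ Xᵀ Y`. -/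
def ridge (n : ℕ) {p : ℕ} (X : Matrix (Fin n) (Fin p) ℝ) (lam : ℝ) (Y : Fin n → ℝ) :
    Fin p → ℝ :=
  ((Sigmahat n X + lam • (1 : Matrix (Fin p) (Fin p) ℝ))⁻¹ *
    (((n : ℝ))⁻¹ • Xᵀ)).mulVec Y

/-- The row space `R(X) ⊆ ℝᵖ` of the design matrix `X`. -/
def rowSpace (n : ℕ) {p : ℕ} (X : Matrix (Fin n) (Fin p) ℝ) : Submodule ℝ (Fin p → ℝ) :=
  Submodule.span ℝ (Set.range fun i => X i)

/-- `P` is the matrix of the orthogonal projection of `ℝᵖ` onto the row space of `X`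
(w.r.t. the standard inner product), i.e. `P = Xᵀ (X Xᵀ)⁻ X`. -/
def IsRowProjection (n : ℕ) {p : ℕ} (X : Matrix (Fin n) (Fin p) ℝ)
    (P : Matrix (Fin p) (Fin p) ℝ) : Prop :=
  Pᵀ = P ∧ P * P = P ∧ (∀ v, P.mulVec v ∈ rowSpace n X) ∧
    ∀ v ∈ rowSpace n X, P.mulVec v = v

/-- `t = λ_min≠0(A)`, the smallest nonzero eigenvalue of `A`. -/
def IsSmallestNonzeroEigenvalue {p : ℕ} (A : Matrix (Fin p) (Fin p) ℝ) (t : ℝ) : Prop :=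
  t ≠ 0 ∧ (∃ v, v ≠ 0 ∧ A.mulVec v = t • v) ∧
    ∀ s : ℝ, s ≠ 0 → (∃ v, v ≠ 0 ∧ A.mulVec v = s • v) → t ≤ s

/-- The random vector `Z : Ω → ℝᵖ` has the multivariate Gaussian distribution
`N_p(mv, C)` under `μ` (characterized through all one-dimensional projections). -/
def IsGaussianVec {Ω : Type*} [MeasurableSpace Ω] (μ : Measure Ω) {p : ℕ}
    (Z : Ω → Fin p → ℝ) (mv : Fin p → ℝ) (C : Matrix (Fin p) (Fin p) ℝ) : Prop :=
  ∀ u : Fin p → ℝ,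
    Measure.map (fun ω => ∑ j, u j * Z ω j) μ =
      gaussianReal (∑ j, u j * mv j)
        (Real.toNNReal (∑ j, ∑ k, u j * C j k * u k))

/-- The normalizing factors `a_{n,p;j}(σ) = n^{1/2} σ⁻¹ Ω(λ)_jj^{-1/2}`. -/
def anp (n : ℕ) {p : ℕ} (X : Matrix (Fin n) (Fin p) ℝ) (lam σ : ℝ) (j : Fin p) : ℝ :=
  Real.sqrt (n : ℝ) * σ⁻¹ * (Real.sqrt (OmegaM n X lam j j))⁻¹

/-- The bias-corrected Ridge estimator
`β̂_corr;j = β̂_j - ∑_{k ≠ j} (P_X)_{jk} β̂_init;k`. -/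
def corrRidge (n : ℕ) {p : ℕ} (X : Matrix (Fin n) (Fin p) ℝ) (lam : ℝ)
    (P : Matrix (Fin p) (Fin p) ℝ) (Y : Fin n → ℝ) (binit : Fin p → ℝ) (j : Fin p) : ℝ :=
  ridge n X lam Y j - ∑ k ∈ Finset.univ.erase j, P j k * binit k

/-- The standard normal cumulative distribution function `Φ`. -/
def Phi (x : ℝ) : ℝ := ((gaussianReal 0 1) (Set.Iic x)).toReal

/-- The p-value `P_j = 2 (1 - Φ((a_j |β̂_corr;j| - Δ_j)₊))`. -/
def pvalOf (aj Δj bc : ℝ) : ℝ := 2 * (1 - Phi (max (aj * |bc| - Δj) 0))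

/-- `max_{k ≠ j} f k`. -/
def maxOff {p : ℕ} (f : Fin p → ℝ) (j : Fin p) : ℝ :=
  ⨆ k : {k : Fin p // k ≠ j}, f k

/-- The distribution function `F_Z(c) = P[min_j 2 (1 - Φ(a_j |Z_j|)) ≤ c]`. -/
def FZdist {Ω' : Type*} [MeasurableSpace Ω'] (ν : Measure Ω') {p : ℕ}
    (a : Fin p → ℝ) (Z : Ω' → Fin p → ℝ) (c : ℝ) : ℝ :=
  (ν {ω' | (⨅ j, 2 * (1 - Phi (a j * |Z ω' j|))) ≤ c}).toReal

/-- A generalized inverse `F_Z^{-1}(α)`. -/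
def FZinv {Ω' : Type*} [MeasurableSpace Ω'] (ν : Measure Ω') {p : ℕ}
    (a : Fin p → ℝ) (Z : Ω' → Fin p → ℝ) (α : ℝ) : ℝ :=
  sInf {c : ℝ | α ≤ FZdist ν a Z c}

/-- `J_G(c) = P[max_{j ∈ G} (a_j |Z_j| + Δ_j) ≤ c]`. -/
def JG {Ω' : Type*} [MeasurableSpace Ω'] (ν : Measure Ω') {p : ℕ}
    (a Δ : Fin p → ℝ) (Z : Ω' → Fin p → ℝ) (G : Finset (Fin p)) (hG : G.Nonempty)
    (c : ℝ) : ℝ :=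
  (ν {ω' | G.sup' hG (fun j => a j * |Z ω' j| + Δ j) ≤ c}).toReal

/-! The centred Ridge estimator is the linear image `R ε` of the noise, `R = (Σ̂ + λ I)⁻¹ n⁻¹ Xᵀ`,
hence Gaussian with covariance `σ² R Rᵀ = σ² n⁻¹ Ω(λ)`. If `β⁰_j = 0`, then `β̂_corr;j` is the sum of
this noise, the bias `E β̂_j - (P_X β⁰)_j` and `-∑_{k ≠ j} (P_X)_{jk} (β̂_init;k - β⁰_k)`; after scaling
by `a_{n,p;j}`, the last term is at most `Δ_j` on the event of (A'), simultaneously for all `j`,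
so the bound holds on that event for every null group `G` at once. -/

lemma sum_sum_mul_mul_eq_dotProduct_mulVec {q : ℕ} (C : Matrix (Fin q) (Fin q) ℝ)
    (u : Fin q → ℝ) : ∑ j, ∑ k, u j * C j k * u k = u ⬝ᵥ C *ᵥ u := by
  simp only [dotProduct, mulVec, Finset.mul_sum]
  exact Finset.sum_congr rfl fun j _ => Finset.sum_congr rfl fun k _ => by ring

lemma sum_mul_const_add_mulVec {q r : ℕ} (u b : Fin r → ℝ) (M : Matrix (Fin r) (Fin q) ℝ)
    (z : Fin q → ℝ) : ∑ j, u j * (b + M *ᵥ z) j = u ⬝ᵥ b + ∑ i, vecMul u M i * z i := by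
  simp only [Pi.add_apply, mul_add, Finset.sum_add_distrib]
  rw [← dotProduct, ← dotProduct, dotProduct_mulVec]
  rfl

-- `Measure.map` sends a non-AE-measurable function to the junk value `0`, which is no Gaussian law.
lemma aemeasurable_of_map_eq_gaussianReal {Ω : Type*} [MeasurableSpace Ω] {μ : Measure Ω}
    {f : Ω → ℝ} {m : ℝ} {v : NNReal} (h : μ.map f = gaussianReal m v) :
    AEMeasurable f μ := by
  by_contra hf
  rw [Measure.map_of_not_aemeasurable hf] at h
  exact IsProbabilityMeasure.ne_zero _ h.symm

namespace IsGaussianVec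

variable {Ω : Type*} [MeasurableSpace Ω] {μ : Measure Ω} {q : ℕ} {Z : Ω → Fin q → ℝ}
  {m : Fin q → ℝ} {C : Matrix (Fin q) (Fin q) ℝ}

lemma map_eval (h : IsGaussianVec μ Z m C) (i : Fin q) :
    μ.map (fun ω => Z ω i) = gaussianReal (m i) (C i i).toNNReal := by
  simpa [Pi.single_apply, sum_sum_mul_mul_eq_dotProduct_mulVec] using h (Pi.single i 1)

lemma integral_eval (h : IsGaussianVec μ Z m C) (i : Fin q) : ∫ ω, Z ω i ∂μ = m i := by
  have hmap := h.map_eval i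
  rw [← integral_id_gaussianReal (μ := m i) (v := (C i i).toNNReal), ← hmap,
    integral_map (f := fun x => x) (aemeasurable_of_map_eq_gaussianReal hmap)
      aestronglyMeasurable_id]

lemma const_add_mulVec (h : IsGaussianVec μ Z m C) {r : ℕ} (b : Fin r → ℝ)
    (M : Matrix (Fin r) (Fin q) ℝ) :
    IsGaussianVec μ (fun ω => b + M *ᵥ Z ω) (b + M *ᵥ m) (M * C * Mᵀ) := by
  intro u
  have hu := h (vecMul u M)
  have hproj : (fun ω => ∑ j, u j * (b + M *ᵥ Z ω) j)
      = (u ⬝ᵥ b + ·) ∘ fun ω => ∑ i, vecMul u M i * Z ω i :=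
    funext fun ω => sum_mul_const_add_mulVec u b M (Z ω)
  rw [hproj, ← AEMeasurable.map_map_of_aemeasurable (by fun_prop)
    (aemeasurable_of_map_eq_gaussianReal hu), hu, gaussianReal_map_const_add,
    sum_mul_const_add_mulVec, sum_sum_mul_mul_eq_dotProduct_mulVec,
    sum_sum_mul_mul_eq_dotProduct_mulVec, ← mulVec_mulVec, ← mulVec_mulVec, mulVec_transpose,
    ← dotProduct_mulVec, add_comm]

lemma sub_integral (h : IsGaussianVec μ Z m C) :
    IsGaussianVec μ (fun ω j => Z ω j - ∫ ω', Z ω' j ∂μ) 0 C := by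
  convert h.const_add_mulVec (-m) 1 using 1
  · ext ω j
    simp [h.integral_eval, sub_eq_neg_add]
  · simp
  · simp

end IsGaussianVec

section Ridge

variable (n : ℕ) {p : ℕ} (X : Matrix (Fin n) (Fin p) ℝ) (lam : ℝ)

def ridgeMatrix : Matrix (Fin p) (Fin n) ℝ :=
  (Sigmahat n X + lam • (1 : Matrix (Fin p) (Fin p) ℝ))⁻¹ * ((n : ℝ)⁻¹ • Xᵀ)

lemma ridge_eq_mulVec (Y : Fin n → ℝ) : ridge n X lam Y = ridgeMatrix n X lam *ᵥ Y := rfl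

lemma transpose_sigmahat_add_smul_one :
    (Sigmahat n X + lam • (1 : Matrix (Fin p) (Fin p) ℝ))ᵀ = Sigmahat n X + lam • 1 := by
  simp [Sigmahat, transpose_add, transpose_smul, transpose_mul]

lemma ridgeMatrix_mul_transpose :
    ridgeMatrix n X lam * (ridgeMatrix n X lam)ᵀ = (n : ℝ)⁻¹ • OmegaM n X lam := by
  rw [ridgeMatrix, transpose_mul, transpose_nonsing_inv, transpose_sigmahat_add_smul_one,
    OmegaM, Sigmahat]
  simp only [transpose_smul, transpose_transpose, Matrix.smul_mul, Matrix.mul_smul, smul_smul,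
    Matrix.mul_assoc]

theorem isGaussianVec_ridge {Ω : Type*} [MeasurableSpace Ω] {μ : Measure Ω} {σ : ℝ}
    {ε : Ω → Fin n → ℝ} (hε : IsGaussianVec μ ε 0 (σ ^ 2 • (1 : Matrix (Fin n) (Fin n) ℝ)))
    (β0 : Fin p → ℝ) :
    IsGaussianVec μ (fun ω => ridge n X lam (X *ᵥ β0 + ε ω))
      (ridgeMatrix n X lam *ᵥ (X *ᵥ β0)) ((σ ^ 2 * (n : ℝ)⁻¹) • OmegaM n X lam) := by
  convert hε.const_add_mulVec (ridgeMatrix n X lam *ᵥ (X *ᵥ β0)) (ridgeMatrix n X lam) using 1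
  · simp only [ridge_eq_mulVec, mulVec_add]
  · simp
  · rw [Matrix.mul_smul, Matrix.mul_one, Matrix.smul_mul, ridgeMatrix_mul_transpose, smul_smul]

end Ridge

lemma anp_nonneg (n : ℕ) {p : ℕ} (X : Matrix (Fin n) (Fin p) ℝ) (lam : ℝ) {σ : ℝ} (hσ : 0 ≤ σ)
    (j : Fin p) : 0 ≤ anp n X lam σ j := by
  unfold anp
  have := inv_nonneg.mpr hσ
  positivity

lemma corrRidge_eq_of_eq_zero (n : ℕ) {p : ℕ} (X : Matrix (Fin n) (Fin p) ℝ) (lam : ℝ)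
    (P : Matrix (Fin p) (Fin p) ℝ) (Y : Fin n → ℝ) (b β : Fin p → ℝ) {j : Fin p}
    (hβ : β j = 0) (m : ℝ) :
    corrRidge n X lam P Y b j = (ridge n X lam Y j - m) + (m - (P *ᵥ β) j)
      - ∑ k ∈ Finset.univ.erase j, P j k * (b k - β k) := by
  have hPβ : (P *ᵥ β) j = ∑ k ∈ Finset.univ.erase j, P j k * β k := by
    rw [mulVec, dotProduct, ← Finset.add_sum_erase _ _ (Finset.mem_univ j), hβ, mul_zero,
      zero_add]
  simp only [corrRidge, hPβ, mul_sub, Finset.sum_sub_distrib]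
  ring

lemma mul_abs_add_sub_le {a z d s Δ : ℝ} (ha : 0 ≤ a) (hs : |a * s| ≤ Δ) :
    a * |z + d - s| ≤ (a * |z| + Δ) + a * |d| := by
  rw [abs_mul, abs_of_nonneg ha] at hs
  have hzds : |z + d - s| ≤ |z| + |d| + |s| :=
    (abs_sub _ _).trans (add_le_add_left (abs_add_le _ _) _)
  nlinarith [mul_le_mul_of_nonneg_left hzds ha]

theorem finite_sample_null_bound_group_general
    {Ω : Type*} [MeasurableSpace Ω] (μ : Measure Ω)
    (n p : ℕ)
    (X : Matrix (Fin n) (Fin p) ℝ) (β0 : Fin p → ℝ)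
    (σ : ℝ) (hσ : 0 < σ)
    (ε : Ω → Fin n → ℝ)
    (hε : IsGaussianVec μ ε 0 (σ ^ 2 • (1 : Matrix (Fin n) (Fin n) ℝ)))
    (lam : ℝ)
    (PX : Matrix (Fin p) (Fin p) ℝ)
    (binit : Ω → Fin p → ℝ)
    (Δ : Fin p → ℝ) (κ : ℝ)
    (hA' : 1 - ENNReal.ofReal κ ≤
      μ {ω | ∀ j, |anp n X lam σ j *
        ∑ k ∈ Finset.univ.erase j, PX j k * (binit ω k - β0 k)| ≤ Δ j}) :
    IsGaussianVec μ
      (fun ω j => ridge n X lam (X.mulVec β0 + ε ω) j - ∫ ω', ridge n X lam (X.mulVec β0 + ε ω') j ∂μ)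
      0 ((σ ^ 2 * (n : ℝ)⁻¹) • OmegaM n X lam) ∧
    1 - ENNReal.ofReal κ ≤
      μ {ω | ∀ G : Finset (Fin p), ∀ hG : G.Nonempty, (∀ j ∈ G, β0 j = 0) →
        (G.sup' hG fun j =>
            anp n X lam σ j * |corrRidge n X lam PX (X.mulVec β0 + ε ω) (binit ω) j|) ≤
          (G.sup' hG fun j => anp n X lam σ j * |ridge n X lam (X.mulVec β0 + ε ω) j - ∫ ω', ridge n X lam (X.mulVec β0 + ε ω') j ∂μ| + Δ j) +
            (⨆ j' : Fin p, anp n X lam σ j' * |(∫ ω', ridge n X lam (X.mulVec β0 + ε ω') j' ∂μ) - PX.mulVec β0 j'|)} := by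
  refine ⟨(isGaussianVec_ridge n X lam hε β0).sub_integral,
    hA'.trans (measure_mono fun ω hω G hG hG0 => Finset.sup'_le _ _ fun j hj => ?_)⟩
  set m : Fin p → ℝ := fun j => ∫ ω', ridge n X lam (X *ᵥ β0 + ε ω') j ∂μ
  set bias : Fin p → ℝ := fun j => anp n X lam σ j * |m j - (PX *ᵥ β0) j|
  have hbias : bias j ≤ ⨆ j', bias j' := le_ciSup (Set.finite_range bias).bddAbove j
  rw [corrRidge_eq_of_eq_zero n X lam PX _ _ _ (hG0 j hj) (m j)]
  calc _ ≤ (anp n X lam σ j * |ridge n X lam (X *ᵥ β0 + ε ω) j - m j| + Δ j) + bias j :=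
        mul_abs_add_sub_le (anp_nonneg n X lam hσ.le j) (hω j)
    _ ≤ _ := add_le_add (Finset.le_sup' (fun j => anp n X lam σ j
          * |ridge n X lam (X *ᵥ β0 + ε ω) j - m j| + Δ j) hj) hbias

theorem finite_sample_null_bound_group
    {Ω : Type*} [MeasurableSpace Ω] (μ : Measure Ω)
    (hμ : IsProbabilityMeasure μ)
    (n p : ℕ) (hn : 0 < n) (hp : 0 < p)
    (X : Matrix (Fin n) (Fin p) ℝ) (β0 : Fin p → ℝ)
    (σ : ℝ) (hσ : 0 < σ)
    (ε : Ω → Fin n → ℝ) (hεm : ∀ i, Measurable fun ω => ε ω i)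
    (hε : IsGaussianVec μ ε 0 (σ ^ 2 • (1 : Matrix (Fin n) (Fin n) ℝ)))
    (lam : ℝ) (hlam : 0 < lam)
    (PX : Matrix (Fin p) (Fin p) ℝ) (hPX : IsRowProjection n X PX)
    (lmin : ℝ) (hlmin : IsSmallestNonzeroEigenvalue (Sigmahat n X) lmin)
    (hminvar : 0 < OmegaMin n X lam)
    (binit : Ω → Fin p → ℝ) (hbm : ∀ j, Measurable fun ω => binit ω j)
    (Δ : Fin p → ℝ) (hΔ : ∀ j, 0 < Δ j) (κ : ℝ) (hκ0 : 0 < κ) (hκ1 : κ < 1)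
    (hA' : 1 - ENNReal.ofReal κ ≤
      μ {ω | ∀ j, |anp n X lam σ j *
        ∑ k ∈ Finset.univ.erase j, PX j k * (binit ω k - β0 k)| ≤ Δ j}) :
    IsGaussianVec μ
      (fun ω j => ridge n X lam (X.mulVec β0 + ε ω) j - ∫ ω', ridge n X lam (X.mulVec β0 + ε ω') j ∂μ)
      0 ((σ ^ 2 * (n : ℝ)⁻¹) • OmegaM n X lam) ∧
    1 - ENNReal.ofReal κ ≤
      μ {ω | ∀ G : Finset (Fin p), ∀ hG : G.Nonempty, (∀ j ∈ G, β0 j = 0) →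
        (G.sup' hG fun j =>
            anp n X lam σ j * |corrRidge n X lam PX (X.mulVec β0 + ε ω) (binit ω) j|) ≤
          (G.sup' hG fun j => anp n X lam σ j * |ridge n X lam (X.mulVec β0 + ε ω) j - ∫ ω', ridge n X lam (X.mulVec β0 + ε ω') j ∂μ| + Δ j) +
            (⨆ j' : Fin p, anp n X lam σ j' * |(∫ ω', ridge n X lam (X.mulVec β0 + ε ω') j' ∂μ) - PX.mulVec β0 j'|)} :=
  finite_sample_null_bound_group_general μ n p X β0 σ hσ ε hε lam PX binit Δ κ hA'

end PaperRidge
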